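/- arXiv:gr-qc/0210061 — 2 statements merged into one kernel-verified Lean document; each statement's English description precedes it below -/
import Mathlib

section
/- Let a and b be countable past-finite partial orders each of whose levels is finite, and for k ∈ ℕ let a_(k) (respectively b_(k)) denote the sub-poset of elements of level at most k. If for every k the finite posets a_(k) and b_(k) are order-isomorphic, then a and b are order-isomorphic. (Compactness step in the proof of Θ ⊆ Γ.) -/
/-!
An order isomorphism between down-closed sets preserves levels, so an isomorphism
`a_(m) ≃ b_(m)` restricts to one `a_(k) ≃ b_(k)` for every `k ≤ m`. The isomorphisms
`a_(k) ≃ b_(k)` thus form an inverse system of finite nonempty sets, and Kőnig's lemma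
yields a compatible family of them. Since every element of a past-finite poset has finite
level, the union of this family is an isomorphism `a ≃ b`.
-/

/-- A poset (given by its order relation `le`) is *past-finite* if the past
`{y | y ≤ x}` of every element `x` is finite. -/
def PastFinite {α : Type} (le : α → α → Prop) : Prop := ∀ x : α, {y : α | le y x}.Finite

/-- The finite poset `s` on `Fin n` *is a stem in* the poset `(α, le)`: there is an
order-embedding of `s` into `(α, le)` whose image is a down-closed (lower) set. -/
def IsStemIn {α : Type} {n : ℕ} (s : Fin n → Fin n → Prop) (le : α → α → Prop) : Prop :=
  ∃ f : Fin n → α, Function.Injective f ∧ (∀ i j, s i j ↔ le (f i) (f j)) ∧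
    ∀ (x : α) (j : Fin n), le x (f j) → ∃ i, f i = x

/-- Two posets *have the same stems* if every finite poset is a stem in one iff it is a
stem in the other (every finite poset is isomorphic to one on some `Fin n`). -/
def SameStems {α β : Type} (le₁ : α → α → Prop) (le₂ : β → β → Prop) : Prop :=
  ∀ (n : ℕ) (s : Fin n → Fin n → Prop), IsStemIn s le₁ ↔ IsStemIn s le₂

/-- The posets `(α, le₁)` and `(β, le₂)` are order-isomorphic. -/
def OrderIsoRel {α β : Type} (le₁ : α → α → Prop) (le₂ : β → β → Prop) : Prop :=
  ∃ e : α ≃ β, ∀ x y : α, le₁ x y ↔ le₂ (e x) (e y)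

/-- Strict order relation associated to `le` (in a partial order). -/
def LtRel {α : Type} (le : α → α → Prop) (x y : α) : Prop := le x y ∧ x ≠ y

/-- `x` is maximal: no element lies strictly above it. -/
def IsMaximalRel {α : Type} (le : α → α → Prop) (x : α) : Prop := ∀ y, le x y → y = x

/-- There is a chain `x₀ < x₁ < ⋯ < x_k = x` (of length `k`) with top element `x`. -/
def ChainTo {α : Type} (le : α → α → Prop) (x : α) (k : ℕ) : Prop :=
  ∃ f : Fin (k + 1) → α, (∀ i j : Fin (k + 1), i < j → LtRel le (f i) (f j)) ∧ f (Fin.last k) = x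

/-- `x` has level `k`: `k` is the maximum length of a chain with top element `x`. -/
def HasLevel {α : Type} (le : α → α → Prop) (x : α) (k : ℕ) : Prop :=
  ChainTo le x k ∧ ∀ m, ChainTo le x m → m ≤ k

/-- A causet (countable past-finite partial order) is *rogue* if there exists a causet
not order-isomorphic to it having the same stems. -/
def IsRogueRel {α : Type} (le : α → α → Prop) : Prop :=
  ∃ (β : Type) (le' : β → β → Prop), IsPartialOrder β le' ∧ Countable β ∧ PastFinite le' ∧
    ¬ OrderIsoRel le le' ∧ SameStems le le'

section

variable {α β : Type}

theorem orderIsoRel_iff_nonempty_relIso {r : α → α → Prop} {s : β → β → Prop} :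
    OrderIsoRel r s ↔ Nonempty (r ≃r s) :=
  ⟨fun ⟨e, he⟩ => ⟨⟨e, (he _ _).symm⟩⟩, fun ⟨e⟩ => ⟨e.toEquiv, fun _ _ => e.map_rel_iff.symm⟩⟩

section Chains

variable {le : α → α → Prop}

theorem LtRel.trans [IsPartialOrder α le] {x y z : α} (hxy : LtRel le x y)
    (hyz : LtRel le y z) : LtRel le x z :=
  ⟨_root_.trans hxy.1 hyz.1, by
    rintro rfl
    exact hyz.2 (antisymm hyz.1 hxy.1)⟩

theorem chainTo_zero (le : α → α → Prop) (x : α) : ChainTo le x 0 :=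
  ⟨fun _ => x, fun i j hij => by omega, rfl⟩

theorem ChainTo.snoc [IsPartialOrder α le] {x y : α} {m : ℕ} (h : ChainTo le x m)
    (hxy : LtRel le x y) : ChainTo le y (m + 1) := by
  obtain ⟨f, hf, rfl⟩ := h
  have hlt_y : ∀ i, LtRel le (f i) y := fun i =>
    (Fin.le_last i).lt_or_eq.elim (fun hi => (hf _ _ hi).trans hxy) (· ▸ hxy)
  refine ⟨Fin.snoc f y, fun i j hij => ?_, by simp⟩
  induction j using Fin.lastCases with
  | last =>
    induction i using Fin.lastCases with
    | last => exact absurd hij (lt_irrefl _)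
    | cast i => simpa using hlt_y i
  | cast j =>
    induction i using Fin.lastCases with
    | last => exact absurd hij (not_lt.2 (Fin.le_last _))
    | cast i => simpa using hf i j (Fin.castSucc_lt_castSucc_iff.1 hij)

theorem ChainTo.map {γ : Type} {r : γ → γ → Prop} (f : α → γ)
    (hf : ∀ a b, LtRel le a b → LtRel r (f a) (f b)) {x : α} {m : ℕ} (h : ChainTo le x m) :
    ChainTo r (f x) m := by
  obtain ⟨g, hg, rfl⟩ := h
  exact ⟨f ∘ g, fun i j hij => hf _ _ (hg i j hij), rfl⟩

theorem ChainTo.relIso {s : β → β → Prop} (e : le ≃r s) {x : α} {m : ℕ}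
    (h : ChainTo le x m) : ChainTo s (e x) m :=
  h.map e fun _ _ h => ⟨e.map_rel_iff.2 h.1, e.injective.ne h.2⟩

theorem ChainTo.of_subrel {p : α → Prop} {x : Subtype p} {m : ℕ}
    (h : ChainTo (Subrel le p) x m) : ChainTo le x.1 m :=
  h.map Subtype.val fun _ _ h => ⟨h.1, fun h' => h.2 (Subtype.ext h')⟩

theorem le_last_of_chain [Std.Refl le] {m : ℕ} {f : Fin (m + 1) → α}
    (hf : ∀ i j, i < j → LtRel le (f i) (f j)) (i : Fin (m + 1)) :
    le (f i) (f (Fin.last m)) :=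
  (Fin.le_last i).lt_or_eq.elim (fun hi => (hf _ _ hi).1) (fun hi => hi ▸ refl _)

theorem ChainTo.subrel [Std.Refl le] {p : α → Prop} (hp : ∀ x y, le x y → p y → p x)
    {x : α} (hx : p x) {m : ℕ} (h : ChainTo le x m) : ChainTo (Subrel le p) ⟨x, hx⟩ m := by
  obtain ⟨f, hf, rfl⟩ := h
  exact ⟨fun i => ⟨f i, hp _ _ (le_last_of_chain hf i) hx⟩,
    fun i j hij => ⟨(hf i j hij).1, fun h => (hf i j hij).2 (congrArg Subtype.val h)⟩, rfl⟩

theorem injective_of_chain {m : ℕ} {f : Fin (m + 1) → α}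
    (hf : ∀ i j, i < j → LtRel le (f i) (f j)) : Function.Injective f := by
  intro i j hij
  by_contra hne
  rcases lt_or_gt_of_ne hne with h | h
  exacts [(hf _ _ h).2 hij, (hf _ _ h).2 hij.symm]

end Chains

section Levels

variable {le : α → α → Prop}

/-- `LevelLE le k x` means `x ∈ a_(k)`. -/
def LevelLE (le : α → α → Prop) (k : ℕ) (x : α) : Prop := ∀ m, ChainTo le x m → m ≤ k

theorem LevelLE.mono {k m : ℕ} (hkm : k ≤ m) {x : α} (hx : LevelLE le k x) :
    LevelLE le m x :=
  fun n hn => (hx n hn).trans hkm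

theorem LevelLE.of_le [IsPartialOrder α le] {k : ℕ} {x y : α} (hxy : le x y)
    (hy : LevelLE le k y) : LevelLE le k x := by
  intro m hm
  by_cases hne : x = y
  · exact hy m (hne ▸ hm)
  · exact Nat.le_of_succ_le (hy (m + 1) (hm.snoc ⟨hxy, hne⟩))

theorem exists_levelLE_of_pastFinite [Std.Refl le] (hpf : PastFinite le) (x : α) :
    ∃ k, LevelLE le k x := by
  have := (hpf x).to_subtype
  refine ⟨Nat.card {y | le y x}, fun m ⟨f, hf, hlast⟩ => ?_⟩
  have hinj : Function.Injective fun i => (⟨f i, hlast ▸ le_last_of_chain hf i⟩ : {y | le y x}) :=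
    fun i j h => injective_of_chain hf (congrArg Subtype.val h)
  have hcard := Nat.card_le_card_of_injective _ hinj
  rw [Nat.card_fin] at hcard
  exact Nat.le_of_succ_le hcard

theorem LevelLE.exists_hasLevel {k : ℕ} {x : α} (hx : LevelLE le k x) :
    ∃ j ≤ k, HasLevel le x j := by
  classical
  exact ⟨_, Nat.findGreatest_le k, Nat.findGreatest_spec (Nat.zero_le k) (chainTo_zero le x),
    fun m hm => Nat.le_findGreatest (hx m hm) hm⟩

theorem finite_levelLE (hfin : ∀ k, {x : α | HasLevel le x k}.Finite) (k : ℕ) :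
    {x : α | LevelLE le k x}.Finite :=
  ((Set.finite_Iic k).biUnion fun j _ => hfin j).subset fun x hx => by
    obtain ⟨j, hjk, hj⟩ := LevelLE.exists_hasLevel hx
    exact Set.mem_biUnion hjk hj

end Levels

section LevelIso

variable {leA : α → α → Prop} {leB : β → β → Prop}

abbrev LevelIso (leA : α → α → Prop) (leB : β → β → Prop) (k : ℕ) : Type :=
  Subrel leA (LevelLE leA k) ≃r Subrel leB (LevelLE leB k)

theorem LevelIso.levelLE_apply [IsPartialOrder β leB] {m : ℕ} (e : LevelIso leA leB m)
    {x : Subtype (LevelLE leA m)} {k : ℕ} (hx : LevelLE leA k x.1) : LevelLE leB k (e x).1 := by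
  intro n hn
  have hchain :=
    ((hn.subrel (p := LevelLE leB m) (fun _ _ => LevelLE.of_le) (e x).2).relIso e.symm).of_subrel
  simp only [Subtype.coe_eta, RelIso.symm_apply_apply] at hchain
  exact hx n hchain

variable [IsPartialOrder α leA] [IsPartialOrder β leB]

def LevelIso.restrict {k m : ℕ} (hkm : k ≤ m) (e : LevelIso leA leB m) : LevelIso leA leB k where
  toFun x := ⟨e ⟨x, x.2.mono hkm⟩, e.levelLE_apply x.2⟩
  invFun y := ⟨e.symm ⟨y, y.2.mono hkm⟩, LevelIso.levelLE_apply e.symm y.2⟩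
  left_inv x := by simp
  right_inv y := by simp
  map_rel_iff' := e.map_rel_iff

theorem LevelIso.restrict_refl {k : ℕ} (e : LevelIso leA leB k) : e.restrict le_rfl = e :=
  RelIso.ext fun _ => rfl

theorem LevelIso.restrict_restrict {k m n : ℕ} (hkm : k ≤ m) (hmn : m ≤ n)
    (e : LevelIso leA leB n) : (e.restrict hmn).restrict hkm = e.restrict (hkm.trans hmn) :=
  RelIso.ext fun _ => rfl

theorem LevelIso.restrict_symm {k m : ℕ} (hkm : k ≤ m) (e : LevelIso leA leB m) :
    (e.restrict hkm).symm = LevelIso.restrict hkm e.symm :=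
  RelIso.ext fun _ => rfl

def LevelIso.IsCompatible (v : ∀ k, LevelIso leA leB k) : Prop :=
  ∀ ⦃k m⦄ (hkm : k ≤ m), (v m).restrict hkm = v k

theorem exists_isCompatible_of_finite (hfin : ∀ k, {x : α | LevelLE leA k x}.Finite)
    (hiso : ∀ k, Nonempty (LevelIso leA leB k)) :
    ∃ v : ∀ k, LevelIso leA leB k, LevelIso.IsCompatible v := by
  have (k : ℕ) : Finite (LevelIso leA leB k) :=
    have : Finite (Subtype (LevelLE leA k)) := (hfin k).to_subtype
    Finite.of_injective _ RelIso.toEquiv_injective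
  exact exists_seq_forall_proj_of_forall_finite (α := LevelIso leA leB)
    (fun hkm e => e.restrict hkm) (fun _ => LevelIso.restrict_refl)
    (fun _ _ _ => LevelIso.restrict_restrict) fun _ _ => Set.toFinite _

noncomputable def glueLevelIso (hA : ∀ x, ∃ k, LevelLE leA k x) (v : ∀ k, LevelIso leA leB k)
    (x : α) : β :=
  v (hA x).choose ⟨x, (hA x).choose_spec⟩

namespace LevelIso.IsCompatible

variable {v : ∀ k, LevelIso leA leB k}

theorem symm (hv : IsCompatible v) : IsCompatible fun k => (v k).symm :=
  fun _ _ hkm => by rw [← restrict_symm, hv hkm]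

theorem coe_apply_eq (hv : IsCompatible v) {k m : ℕ} {x : α} (hk : LevelLE leA k x)
    (hm : LevelLE leA m x) : (v k ⟨x, hk⟩ : β) = v m ⟨x, hm⟩ := by
  wlog hkm : k ≤ m generalizing k m
  · exact (this hm hk (le_of_not_ge hkm)).symm
  rw [← hv hkm]
  rfl

theorem glueLevelIso_eq (hv : IsCompatible v) (hA : ∀ x, ∃ k, LevelLE leA k x) {k : ℕ} {x : α}
    (hk : LevelLE leA k x) : glueLevelIso hA v x = v k ⟨x, hk⟩ :=
  hv.coe_apply_eq _ _

theorem nonempty_relIso (hv : IsCompatible v) (hA : ∀ x, ∃ k, LevelLE leA k x)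
    (hB : ∀ y, ∃ k, LevelLE leB k y) : Nonempty (leA ≃r leB) := by
  refine ⟨⟨⟨glueLevelIso hA v, glueLevelIso hB fun k => (v k).symm, fun x => ?_, fun y => ?_⟩,
    fun {x y} => ?_⟩⟩
  · obtain ⟨k, hk⟩ := hA x
    rw [hv.glueLevelIso_eq hA hk, hv.symm.glueLevelIso_eq hB (v k ⟨x, hk⟩).2]
    simp
  · obtain ⟨k, hk⟩ := hB y
    rw [hv.symm.glueLevelIso_eq hB hk, hv.glueLevelIso_eq hA ((v k).symm ⟨y, hk⟩).2]
    simp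
  · obtain ⟨k, hk⟩ := hA x
    obtain ⟨m, hm⟩ := hA y
    simp only [Equiv.coe_fn_mk]
    rw [hv.glueLevelIso_eq hA (hk.mono (le_max_left k m)),
      hv.glueLevelIso_eq hA (hm.mono (le_max_right k m))]
    exact (v (max k m)).map_rel_iff

end LevelIso.IsCompatible

end LevelIso

end

theorem orderIso_of_levelwise_iso_general (α β : Type) (leA : α → α → Prop) (leB : β → β → Prop)
    (hpoA : IsPartialOrder α leA) (hpoB : IsPartialOrder β leB)
    (hpfA : PastFinite leA) (hpfB : PastFinite leB)
    (hfinA : ∀ k : ℕ, {x : α | HasLevel leA x k}.Finite)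
    (hiso : ∀ k : ℕ,
      OrderIsoRel
        (fun x y : {z : α // ∀ m, ChainTo leA z m → m ≤ k} => leA x.1 y.1)
        (fun x y : {z : β // ∀ m, ChainTo leB z m → m ≤ k} => leB x.1 y.1)) :
    OrderIsoRel leA leB := by
  obtain ⟨v, hv⟩ := exists_isCompatible_of_finite (finite_levelLE hfinA)
    fun k => orderIsoRel_iff_nonempty_relIso.1 (hiso k)
  exact orderIsoRel_iff_nonempty_relIso.2
    (hv.nonempty_relIso (exists_levelLE_of_pastFinite hpfA) (exists_levelLE_of_pastFinite hpfB))

/-- **Compactness step**: if `a` and `b` are countable past-finite partial orders all of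
whose levels are finite, and for each `k` the (finite) sub-posets of elements of level
at most `k` are order-isomorphic, then `a` and `b` are order-isomorphic. -/
theorem orderIso_of_levelwise_iso (α β : Type) (leA : α → α → Prop) (leB : β → β → Prop)
    (hpoA : IsPartialOrder α leA) (hpoB : IsPartialOrder β leB)
    (hcA : Countable α) (hcB : Countable β)
    (hpfA : PastFinite leA) (hpfB : PastFinite leB)
    (hfinA : ∀ k : ℕ, {x : α | HasLevel leA x k}.Finite)
    (hfinB : ∀ k : ℕ, {x : β | HasLevel leB x k}.Finite)
    (hiso : ∀ k : ℕ,
      OrderIsoRel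
        (fun x y : {z : α // ∀ m, ChainTo leA z m → m ≤ k} => leA x.1 y.1)
        (fun x y : {z : β // ∀ m, ChainTo leB z m → m ≤ k} => leB x.1 y.1)) :
    OrderIsoRel leA leB :=
  orderIso_of_levelwise_iso_general α β leA leB hpoA hpoB hpfA hpfB hfinA hiso
end

section
/- The set of relations r ∈ Ω̃ that are 'chain-tailed', i.e., for which there exists N ∈ ℕ such that r(k, m) holds for all m ≥ N and all k < m, is dense in Ω̃ (with the subspace topology inherited from the product space (ℕ × ℕ) → Bool). In particular Ω̃ is separable. -/
/-- Ω̃: the completed labeled causets, modelled as the transitive natural relations on ℕ,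
viewed as a subset of the product space `(ℕ × ℕ) → Bool`. -/
def OmegaT : Set ((ℕ × ℕ) → Bool) :=
  {r | (∀ x y z : ℕ, r (x, y) = true → r (y, z) = true → r (x, z) = true) ∧
       (∀ x y : ℕ, r (x, y) = true → x < y)}

/-- The partial order `≤` on ℕ determined by `r ∈ Ω̃` (the reflexive closure of `r`). -/
def leOf (r : OmegaT) (x y : ℕ) : Prop := x = y ∨ (r : (ℕ × ℕ) → Bool) (x, y) = true

/-- The stem set of a finite poset `s` on `Fin n`:
`stem(s) = {r ∈ Ω̃ : s is a stem in the poset (ℕ, r)}`. -/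
def stemSet (n : ℕ) (s : Fin n → Fin n → Prop) : Set OmegaT :=
  {r | IsStemIn s (leOf r)}

/-- The family of all stem sets (where `s` ranges over finite partial orders). -/
def stemFamily : Set (Set OmegaT) :=
  {S | ∃ (n : ℕ) (s : Fin n → Fin n → Prop), IsPartialOrder (Fin n) s ∧ S = stemSet n s}

/-- The cylinder set of a relation `s` on `{0,…,n-1}`: the relations in Ω̃ whose
restriction to `{0,…,n-1}` equals `s`. -/
def cyl (n : ℕ) (s : Fin n → Fin n → Bool) : Set OmegaT :=
  {r | ∀ i j : Fin n, (r : (ℕ × ℕ) → Bool) ((i : ℕ), (j : ℕ)) = s i j}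

/-- `s` is a transitive natural relation on `{0,…,n-1}`. -/
def IsFinCauset (n : ℕ) (s : Fin n → Fin n → Bool) : Prop :=
  (∀ i j k : Fin n, s i j = true → s j k = true → s i k = true) ∧
  (∀ i j : Fin n, s i j = true → (i : ℕ) < (j : ℕ))

/-- The family of all cylinder sets. -/
def cylFamily : Set (Set OmegaT) :=
  {C | ∃ (n : ℕ) (s : Fin n → Fin n → Bool), IsFinCauset n s ∧ C = cyl n s}

/-- A subset of Ω̃ is invariant under order-isomorphism (i.e. covariant). -/
def IsoInvariant (A : Set OmegaT) : Prop :=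
  ∀ r₁ r₂ : OmegaT, OrderIsoRel (leOf r₁) (leOf r₂) → r₁ ∈ A → r₂ ∈ A

/-- Θ̃: the set of `r ∈ Ω̃` whose poset `(ℕ, r)` is rogue. -/
def ThetaT : Set OmegaT := {r | IsRogueRel (leOf r)}

/-- The chain-tailed relations are dense in Ω̃; in particular Ω̃ is separable. -/
theorem chainTailed_dense_and_separable :
    Dense {r : OmegaT | ∃ N : ℕ, ∀ m : ℕ, N ≤ m → ∀ k : ℕ, k < m →
        (r : (ℕ × ℕ) → Bool) (k, m) = true} ∧
    TopologicalSpace.SeparableSpace OmegaT := by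
  constructor
  · intro r
    -- the approximating chain-tailed relations
    set g : ℕ → (ℕ × ℕ) → Bool :=
      fun N p => if p.2 < N then (r : (ℕ × ℕ) → Bool) p else decide (p.1 < p.2) with hg
    have hmem : ∀ N, g N ∈ OmegaT := by
      intro N
      obtain ⟨htr, hnat⟩ := r.2
      constructor
      · intro x y z hxy hyz
        simp only [hg] at hxy hyz ⊢
        by_cases hz : z < N
        · rw [if_pos hz] at hyz ⊢
          have hy : y < N := lt_trans (hnat y z hyz) hz
          rw [if_pos hy] at hxy
          exact htr x y z hxy hyz
        · rw [if_neg hz] at hyz ⊢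
          have hxy' : x < y := by
            by_cases hy : y < N
            · rw [if_pos hy] at hxy; exact hnat x y hxy
            · rw [if_neg hy] at hxy; exact of_decide_eq_true hxy
          have hyz' : y < z := of_decide_eq_true hyz
          exact decide_eq_true (lt_trans hxy' hyz')
      · intro x y hxy
        simp only [hg] at hxy
        by_cases hy : y < N
        · rw [if_pos hy] at hxy; exact hnat x y hxy
        · rw [if_neg hy] at hxy; exact of_decide_eq_true hxy
    set f : ℕ → OmegaT := fun N => ⟨g N, hmem N⟩ with hf
    have htend : Filter.Tendsto f Filter.atTop (nhds r) := by
      rw [show r = ⟨r.1, r.2⟩ from rfl]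
      rw [tendsto_subtype_rng]
      rw [tendsto_pi_nhds]
      intro p
      apply Filter.Tendsto.congr' _ (tendsto_const_nhds (x := r.1 p))
      filter_upwards [Filter.eventually_ge_atTop (p.2 + 1)] with N hN
      simp only [hf, hg]
      rw [if_pos (by omega)]
    refine mem_closure_of_tendsto htend ?_
    filter_upwards with N
    refine ⟨N, fun m hm k hk => ?_⟩
    simp only [hf, hg]
    rw [if_neg (by omega)]
    exact decide_eq_true hk
  · infer_instance
end
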